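/- Suppose 2λ/(1−λ) < μ < 4λ/(1−λ). Then h'(ḡ(μ)) = ((1−λ)μ − 2λ)·v_max/(μ·M·L); moreover h'(d) ≤ (μ/(2λ·v_max))·d for every d ∈ (0, ḡ(μ)], and h'(d) > (μ/(2λ·v_max))·d for every d ∈ (ḡ(μ), (1−λ)²v_max²/(4ML)]. -/
import Mathlib


/-- The function h'(d) from Proposition 6.2. -/
noncomputable def hLow (lam vmax M L d : ℝ) : ℝ :=
  ((1 - lam) * vmax - Real.sqrt ((1 - lam) ^ 2 * vmax ^ 2 - 4 * M * L * d)) / (2 * M * L)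

/-- The function ḡ(μ) from the proof of Proposition 6.2. -/
noncomputable def gbar (lam vmax M L : ℝ) : ℝ → ℝ := fun μ =>
  2 * (lam * (1 - lam) * μ - 2 * lam ^ 2) * vmax ^ 2 / (μ ^ 2 * M * L)

set_option maxHeartbeats 2000000 in
theorem stmt_9 (vmax M L lam : ℝ) (hv : 0 < vmax) (hM : 0 < M) (hL : 0 < L)
    (hlam : lam ∈ Set.Ioo (0:ℝ) 1) (μ : ℝ)
    (hμ1 : 2 * lam / (1 - lam) < μ) (hμ2 : μ < 4 * lam / (1 - lam)) :
    hLow lam vmax M L (gbar lam vmax M L μ) = ((1 - lam) * μ - 2 * lam) * vmax / (μ * M * L) ∧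
    (∀ d : ℝ, 0 < d → d ≤ gbar lam vmax M L μ →
      hLow lam vmax M L d ≤ (μ / (2 * lam * vmax)) * d) ∧
    (∀ d : ℝ, gbar lam vmax M L μ < d → d ≤ (1 - lam) ^ 2 * vmax ^ 2 / (4 * M * L) →
      (μ / (2 * lam * vmax)) * d < hLow lam vmax M L d) := by
  obtain ⟨hl0, hl1⟩ := hlam
  have h1l : 0 < 1 - lam := by linarith
  have hμ0 : 0 < μ := lt_trans (by positivity) hμ1
  have hA : 2 * lam < (1 - lam) * μ := by
    rw [div_lt_iff₀ h1l] at hμ1; linarith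
  have hB : (1 - lam) * μ < 4 * lam := by
    rw [lt_div_iff₀ h1l] at hμ2; linarith
  have hμne : μ ≠ 0 := ne_of_gt hμ0
  have hMne : M ≠ 0 := ne_of_gt hM
  have hLne : L ≠ 0 := ne_of_gt hL
  have hgval : (1-lam)^2*vmax^2 - 4*M*L*(gbar lam vmax M L μ)
      = ((4*lam/μ - (1-lam))*vmax)^2 := by
    unfold gbar; field_simp; ring
  have hpos : 0 ≤ (4*lam/μ - (1-lam))*vmax := by
    have h4 : (1-lam) < 4*lam/μ := by rw [lt_div_iff₀ hμ0]; nlinarith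
    nlinarith
  have hsq : Real.sqrt ((1-lam)^2*vmax^2 - 4*M*L*(gbar lam vmax M L μ))
      = (4*lam/μ - (1-lam))*vmax := by
    rw [hgval, Real.sqrt_sq hpos]
  refine ⟨?_, ?_, ?_⟩
  · unfold hLow
    rw [show (1 - lam) ^ 2 * vmax ^ 2 - 4 * M * L * gbar lam vmax M L μ
        = (1-lam)^2*vmax^2 - 4*M*L*(gbar lam vmax M L μ) by ring, hsq]
    field_simp
    ring
  · intro d hd0 hdg
    have hdg' : μ^2*M*L*d ≤ 2*(lam*(1-lam)*μ - 2*lam^2)*vmax^2 := by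
      unfold gbar at hdg
      rw [le_div_iff₀ (by positivity)] at hdg
      nlinarith
    have hrad : 0 ≤ (1-lam)^2*vmax^2 - 4*M*L*d := by
      nlinarith [hdg', sq_nonneg (((1-lam)*μ - 4*lam)*vmax), mul_pos hμ0 hμ0]
    obtain ⟨S, hSdef⟩ : ∃ S, S = Real.sqrt ((1 - lam) ^ 2 * vmax ^ 2 - 4 * M * L * d) :=
      ⟨_, rfl⟩
    have hS2 : S^2 = (1-lam)^2*vmax^2 - 4*M*L*d := by rw [hSdef]; exact Real.sq_sqrt hrad
    have hS0 : 0 ≤ S := hSdef ▸ Real.sqrt_nonneg _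
    have hS2' : ((2*lam*vmax)*S)^2 = (2*lam*vmax)^2 * ((1-lam)^2*vmax^2 - 4*M*L*d) := by
      rw [mul_pow, hS2]
    have hdiff : 0 ≤ 4*M*L*d * (2*(lam*(1-lam)*μ - 2*lam^2)*vmax^2 - μ^2*M*L*d) := by
      apply mul_nonneg (by positivity)
      linarith
    have hsq' : ((1-lam)*vmax*(2*lam*vmax) - μ*d*(2*M*L))^2 ≤ ((2*lam*vmax)*S)^2 := by
      nlinarith [hdiff, hS2']
    have hcS0 : 0 ≤ (2*lam*vmax)*S := mul_nonneg (by positivity) hS0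
    have hkey : (1-lam)*vmax*(2*lam*vmax) - μ*d*(2*M*L) ≤ (2*lam*vmax)*S := by
      nlinarith [hsq', hcS0]
    unfold hLow
    rw [div_le_iff₀ (by positivity), ← hSdef]
    rw [show μ/(2*lam*vmax)*d*(2*M*L) = μ*d*(2*M*L)/(2*lam*vmax) by ring,
      le_div_iff₀ (by positivity)]
    nlinarith [hkey]
  · intro d hgd hdm
    have hg0 : 0 < gbar lam vmax M L μ := by
      unfold gbar
      apply div_pos ?_ (by positivity)
      nlinarith [mul_pos (mul_pos hl0 (show (0:ℝ) < (1-lam)*μ - 2*lam by linarith)) (pow_pos hv 2)]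
    have hd0 : 0 < d := hg0.trans hgd
    have hdg' : 2*(lam*(1-lam)*μ - 2*lam^2)*vmax^2 < μ^2*M*L*d := by
      unfold gbar at hgd
      rw [div_lt_iff₀ (by positivity)] at hgd
      nlinarith
    have hdm' : 4*M*L*d ≤ (1-lam)^2*vmax^2 := by
      rw [le_div_iff₀ (by positivity)] at hdm
      nlinarith
    have hrad : 0 ≤ (1-lam)^2*vmax^2 - 4*M*L*d := by linarith
    obtain ⟨S, hSdef⟩ : ∃ S, S = Real.sqrt ((1 - lam) ^ 2 * vmax ^ 2 - 4 * M * L * d) :=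
      ⟨_, rfl⟩
    have hS2 : S^2 = (1-lam)^2*vmax^2 - 4*M*L*d := by rw [hSdef]; exact Real.sq_sqrt hrad
    have hS0 : 0 ≤ S := hSdef ▸ Real.sqrt_nonneg _
    have hS2' : ((2*lam*vmax)*S)^2 = (2*lam*vmax)^2 * ((1-lam)^2*vmax^2 - 4*M*L*d) := by
      rw [mul_pow, hS2]
    have hx0 : 0 < (1-lam)*vmax*(2*lam*vmax) - μ*d*(2*M*L) := by
      nlinarith [mul_nonneg hμ0.le (sub_nonneg.2 hdm'),
        mul_pos h1l (mul_pos (show (0:ℝ) < 4*lam - (1-lam)*μ by linarith) (pow_pos hv 2))]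
    have hdiff : 0 < 4*M*L*d * (μ^2*M*L*d - 2*(lam*(1-lam)*μ - 2*lam^2)*vmax^2) := by
      apply mul_pos (by positivity)
      linarith
    have hsq' : ((2*lam*vmax)*S)^2 < ((1-lam)*vmax*(2*lam*vmax) - μ*d*(2*M*L))^2 := by
      nlinarith [hdiff, hS2']
    have hcS0 : 0 ≤ (2*lam*vmax)*S := mul_nonneg (by positivity) hS0
    have hkey : (2*lam*vmax)*S < (1-lam)*vmax*(2*lam*vmax) - μ*d*(2*M*L) := by
      nlinarith [hsq', hcS0, hx0]
    unfold hLow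
    rw [lt_div_iff₀ (by positivity), ← hSdef]
    rw [show μ/(2*lam*vmax)*d*(2*M*L) = μ*d*(2*M*L)/(2*lam*vmax) by ring,
      div_lt_iff₀ (by positivity)]
    nlinarith [hkey]
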